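/- For F(x) = cosh x − 1 and G(y) = cosh y − 1, the identity M(x,y) = −(cosh x − 1)²(cosh y − 1)²·(cosh²x − cosh x·cosh y + 2cosh y + 2) holds for all x, y ∈ ℝ. -/

import Mathlib

/-!
For `F = cosh - 1` the conserved energy of `F'' = F + 1` gives `F'² = F (F + 2)`, and
differentiating the equation gives `F''' = F'`. Substituting these into `M` leaves a polynomial
in `u = F x`, `v = G y` which factors as `-u² v² (u² + u + v - u v + 4)`; with `u = cosh x - 1`,
`v = cosh y - 1` the last factor is `cosh² x - cosh x cosh y + 2 cosh y + 2`.
-/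

/-- The function `M(x,y)` built from `F` and `G`. -/
noncomputable def Mfun (F G : ℝ → ℝ) (x y : ℝ) : ℝ :=
  (6 * F x * (deriv (deriv F) x) ^ 2 - 3 * (deriv F x) ^ 2 * deriv (deriv F) x
      - 2 * F x * deriv F x * deriv (deriv (deriv F)) x) * G y * (deriv G y) ^ 2
    + F x * (deriv F x) ^ 2 * deriv (deriv F) x
      * ((deriv G y) ^ 2 - 2 * G y * deriv (deriv G) y)

theorem Mfun_eq_of_deriv_deriv_eq_add_one {F G : ℝ → ℝ}
    (hF'' : deriv (deriv F) = fun x => F x + 1) (hF' : ∀ x, deriv F x ^ 2 = F x * (F x + 2))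
    (hG'' : deriv (deriv G) = fun y => G y + 1) (hG' : ∀ y, deriv G y ^ 2 = G y * (G y + 2))
    (x y : ℝ) :
    Mfun F G x y = -(F x ^ 2 * G y ^ 2 * (F x ^ 2 + F x + G y - F x * G y + 4)) := by
  have hF''' : deriv (deriv (deriv F)) = deriv F := by
    rw [hF'']
    exact funext fun x => deriv_add_const 1
  have hFF' : 2 * F x * deriv F x * deriv F x = 2 * F x * (F x * (F x + 2)) := by
    rw [mul_assoc, ← pow_two, hF']
  rw [Mfun, hF''', hFF', hF'', hF', hG'', hG']
  ring

theorem deriv_cosh_sub_one : deriv (fun x : ℝ => Real.cosh x - 1) = Real.sinh :=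
  funext fun x => by rw [deriv_sub_const, Real.deriv_cosh]

theorem deriv_deriv_cosh_sub_one :
    deriv (deriv fun x : ℝ => Real.cosh x - 1) = fun x => (Real.cosh x - 1) + 1 := by
  simp only [deriv_cosh_sub_one, Real.deriv_sinh, sub_add_cancel]

theorem deriv_cosh_sub_one_sq (x : ℝ) :
    deriv (fun x : ℝ => Real.cosh x - 1) x ^ 2 = (Real.cosh x - 1) * ((Real.cosh x - 1) + 2) := by
  rw [deriv_cosh_sub_one, Real.sinh_sq]
  ring

theorem stmt17 (x y : ℝ) :
    Mfun (fun x => Real.cosh x - 1) (fun y => Real.cosh y - 1) x y =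
      -((Real.cosh x - 1) ^ 2 * (Real.cosh y - 1) ^ 2
        * (Real.cosh x ^ 2 - Real.cosh x * Real.cosh y + 2 * Real.cosh y + 2)) := by
  rw [Mfun_eq_of_deriv_deriv_eq_add_one deriv_deriv_cosh_sub_one deriv_cosh_sub_one_sq
    deriv_deriv_cosh_sub_one deriv_cosh_sub_one_sq]
  ring
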